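/- Let D(T) be the 5×5 matrix over ℚ[p1,p2,p3,k1,k2,k3,h][T] with rows (0,0,0,-k1,p1·T), (0,0,0,k2,-p2·T), (0,0,0,-k3,p3·T), (-k1,k2,-k3,0,-h·T), (-p1,p2,-p3,-h,0). Then det(D(T) - T·Id₅) = T⁵ + ((p·p) - h²)T⁴ - (k·k)T³ - ((p·p)(k·k) - (p·k)²)T². -/
import Mathlib


open Matrix Polynomial

noncomputable def p1 : MvPolynomial (Fin 7) ℚ := MvPolynomial.X 0
noncomputable def p2 : MvPolynomial (Fin 7) ℚ := MvPolynomial.X 1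
noncomputable def p3 : MvPolynomial (Fin 7) ℚ := MvPolynomial.X 2
noncomputable def k1 : MvPolynomial (Fin 7) ℚ := MvPolynomial.X 3
noncomputable def k2 : MvPolynomial (Fin 7) ℚ := MvPolynomial.X 4
noncomputable def k3 : MvPolynomial (Fin 7) ℚ := MvPolynomial.X 5
noncomputable def h : MvPolynomial (Fin 7) ℚ := MvPolynomial.X 6

noncomputable def D : Matrix (Fin 5) (Fin 5) (Polynomial (MvPolynomial (Fin 7) ℚ)) :=
  !![0, 0, 0, -(Polynomial.C k1), (Polynomial.C p1 * Polynomial.X);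
    0, 0, 0, (Polynomial.C k2), -(Polynomial.C p2 * Polynomial.X);
    0, 0, 0, -(Polynomial.C k3), (Polynomial.C p3 * Polynomial.X);
    -(Polynomial.C k1), (Polynomial.C k2), -(Polynomial.C k3), 0, -(Polynomial.C h * Polynomial.X);
    -(Polynomial.C p1), (Polynomial.C p2), -(Polynomial.C p3), -(Polynomial.C h), 0]

set_option maxHeartbeats 4000000 in
set_option maxRecDepth 10000 in
theorem main :
    Matrix.det ((Polynomial.X : Polynomial (MvPolynomial (Fin 7) ℚ)) • (1 : Matrix (Fin 5) (Fin 5) (Polynomial (MvPolynomial (Fin 7) ℚ))) - D) =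
      Polynomial.X ^ 5 + Polynomial.C ((p1^2 + p2^2 + p3^2) - h^2) * Polynomial.X ^ 4
        - Polynomial.C (k1^2 + k2^2 + k3^2) * Polynomial.X ^ 3
        - Polynomial.C ((p1^2 + p2^2 + p3^2)*(k1^2 + k2^2 + k3^2) - (p1*k1 + p2*k2 + p3*k3)^2) * Polynomial.X ^ 2 := by
  simp (config := { decide := true }) only [Matrix.det_succ_row_zero, Fin.sum_univ_succ,
    Fin.sum_univ_zero, Matrix.submatrix_apply, Matrix.sub_apply, Matrix.smul_apply,
    Matrix.one_apply, D, Matrix.of_apply,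
    Matrix.cons_val', Matrix.cons_val_zero, Matrix.cons_val_one, Matrix.head_cons,
    Matrix.empty_val', Matrix.cons_val_fin_one, Matrix.head_fin_const,
    Fin.succ_zero_eq_one, Fin.succ_one_eq_two, Matrix.cons_val_succ,
    Fin.succAbove, Fin.val_zero, Fin.val_succ, Matrix.det_fin_one, Matrix.det_fin_zero, Fin.castSucc_zero, Fin.castSucc_one, smul_eq_mul,
    Fin.ext_iff, Fin.lt_def,
    show Fin.castSucc (2:Fin 3) = 2 from rfl, show Fin.castSucc (2:Fin 4) = 2 from rfl,
    show Fin.castSucc (3:Fin 4) = 3 from rfl, show Fin.succ (2:Fin 3) = 3 from rfl,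
    show Fin.succ (2:Fin 4) = 3 from rfl, show Fin.succ (3:Fin 4) = 4 from rfl,
    Matrix.cons_val_two, Matrix.cons_val_three, Matrix.cons_val_four, Matrix.tail_cons,
    if_true, if_false, reduceIte]
  simp only [map_sub, map_add, _root_.map_mul, map_pow]
  ring
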